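/- Let h be a complex number with exp(h) ≠ 1 and let [x] = (exp(hx/2) − exp(−hx/2))/(exp(h/2) − exp(−h/2)) for x ∈ ℂ. Let k ≥ 1 be an integer, fix two distinct indices j, m in the integer interval [1−k, k−1], and let complex numbers L_{i,2k+1} (i ∈ [−k, k]), L_{l,2k} (l ∈ [−k, k−1]) and L_{i,2k−1} (i ∈ [1−k, k−1], i ≠ j, i ≠ m) be given such that [L_{i,2k} − L_{l,2k} + s] ≠ 0 and [L_{i,2k} − L_{l,2k} + s − 1] ≠ 0 for all i ≠ l in [−k, k−1] and s ∈ {0, 1}. Then ∑_{s=0}^{1} ∑_{l=−k}^{k−1} (−1)^s · ( ∏_{i=−k}^{k} [L_{i,2k+1} − L_{l,2k} + s] · ∏_{i=1−k, i≠j,m}^{k−1} [L_{i,2k−1} − L_{l,2k} + s] ) / ( ∏_{i≠l, i=−k}^{k−1} [L_{i,2k} − L_{l,2k} + s][L_{i,2k} − L_{l,2k} + s − 1] ) = 0. (Identity (24a).) -/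

import Mathlib

/-! With `w = exp (h y)`, the bracket `[a - y]` equals `w - exp (h a)` up to the factors
`exp (h a / 2)`, `exp (h y / 2)` and a constant. Hence, for nodes `y_p` (`p ∈ S`) and
`#S - 2` parameters `a_t`, the sum `∑_p ∏_t [a_t - y_p] / ∏_{q ≠ p} [y_q - y_p]` is a
constant multiple of `∑_p P(w_p) / ∏_{q ≠ p} (w_p - w_q)` with `P = ∏_t (X - exp (h a_t))`:
the half-exponentials balance exactly because there are two more nodes than parameters.
The latter sum is the coefficient of `X ^ (#S - 1)` in the Lagrange interpolant of `P`,
which vanishes as `deg P = #S - 2`. Identity (24a) is the case of the `4k` nodes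
`L_{l,2k} - s`, `s ∈ {0, 1}`, and the `4k - 2` parameters `L_{i,2k+1}`, `L_{i,2k-1}`:
the sign `(-1)^s = -[y_{l,1-s} - y_{l,s}]` supplies the one factor missing from its
denominator. -/

noncomputable def qbr (h x : ℂ) : ℂ :=
  (Complex.exp (h * x / 2) - Complex.exp (-(h * x) / 2)) /
    (Complex.exp (h / 2) - Complex.exp (-h / 2))

open Finset Polynomial

lemma qbr_sub (h a b : ℂ) :
    qbr h (a - b) = (Complex.exp (h * b) - Complex.exp (h * a)) /
      (Complex.exp (h * a / 2) * Complex.exp (h * b / 2) *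
        (Complex.exp (-h / 2) - Complex.exp (h / 2))) := by
  have hsq (x : ℂ) : Complex.exp (h * x) = Complex.exp (h * x / 2) ^ 2 := by
    rw [sq, ← Complex.exp_add, add_halves]
  have hpos : Complex.exp (h * (a - b) / 2) =
      Complex.exp (h * a / 2) / Complex.exp (h * b / 2) := by
    rw [← Complex.exp_sub]; ring_nf
  have hneg : Complex.exp (-(h * (a - b)) / 2) =
      Complex.exp (h * b / 2) / Complex.exp (h * a / 2) := by
    rw [← Complex.exp_sub]; ring_nf
  have hnum : Complex.exp (h * a / 2) / Complex.exp (h * b / 2) -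
      Complex.exp (h * b / 2) / Complex.exp (h * a / 2) =
      -((Complex.exp (h * b) - Complex.exp (h * a)) /
        (Complex.exp (h * a / 2) * Complex.exp (h * b / 2))) := by
    rw [hsq a, hsq b]; field_simp; ring
  rw [qbr, hpos, hneg, hnum, neg_div, ← div_neg, neg_sub, div_div]

lemma exp_ne_exp_of_qbr_sub_ne_zero {h a b : ℂ} (hab : qbr h (a - b) ≠ 0) :
    Complex.exp (h * a) ≠ Complex.exp (h * b) := by
  intro heq
  rw [qbr_sub, heq, sub_self, zero_div] at hab
  exact hab rfl

lemma exp_sub_exp_ne_zero_of_qbr_ne_zero {h x : ℂ} (hx : qbr h x ≠ 0) :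
    Complex.exp (-h / 2) - Complex.exp (h / 2) ≠ 0 := by
  intro hD
  rw [qbr, ← neg_sub (Complex.exp (-h / 2)), hD, neg_zero, div_zero] at hx
  exact hx rfl

lemma qbr_one {h : ℂ} (hh : Complex.exp h ≠ 1) : qbr h 1 = 1 := by
  have hD : Complex.exp (h / 2) - Complex.exp (-h / 2) ≠ 0 := by
    intro hD
    apply hh
    rw [← add_halves h, Complex.exp_add]
    nth_rw 1 [sub_eq_zero.mp hD]
    rw [← Complex.exp_add, neg_div, neg_add_cancel, Complex.exp_zero]
  rw [qbr, mul_one, div_self hD]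

lemma qbr_neg (h x : ℂ) : qbr h (-x) = -qbr h x := by
  rw [qbr, qbr, ← neg_div, neg_sub, mul_neg, neg_neg]

lemma prod_qbr_div_prod_qbr_eq_mul_nodal_div {ι κ : Type*} [DecidableEq ι] (h : ℂ)
    {S : Finset ι} (y : ι → ℂ) (T : Finset κ) (a : κ → ℂ) (hcard : #T + 2 = #S) {p : ι}
    (hp : p ∈ S)
    (hD : Complex.exp (-h / 2) - Complex.exp (h / 2) ≠ 0) :
    (∏ t ∈ T, qbr h (a t - y p)) / ∏ q ∈ S.erase p, qbr h (y q - y p) =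
      (Complex.exp (-h / 2) - Complex.exp (h / 2)) * (∏ q ∈ S, Complex.exp (h * y q / 2)) /
        (∏ t ∈ T, Complex.exp (h * a t / 2)) *
      ((Lagrange.nodal T fun t => Complex.exp (h * a t)).eval (Complex.exp (h * y p)) /
        ∏ q ∈ S.erase p, (Complex.exp (h * y p) - Complex.exp (h * y q))) := by
  have hcard' : #(S.erase p) = #T + 1 := by rw [card_erase_of_mem hp]; omega
  simp only [qbr_sub, prod_div_distrib, prod_mul_distrib, prod_const, hcard', Lagrange.eval_nodal]
  rw [← mul_prod_erase S (fun q => Complex.exp (h * y q / 2)) hp]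
  set D := Complex.exp (-h / 2) - Complex.exp (h / 2)
  field_simp
  ring

theorem sum_prod_qbr_div_prod_qbr_eq_zero {ι κ : Type*} [DecidableEq ι] (h : ℂ) (S : Finset ι)
    (y : ι → ℂ) (T : Finset κ) (a : κ → ℂ) (hcard : #T + 2 = #S)
    (hy : ∀ p ∈ S, ∀ q ∈ S, p ≠ q → qbr h (y q - y p) ≠ 0) :
    ∑ p ∈ S, (∏ t ∈ T, qbr h (a t - y p)) / ∏ q ∈ S.erase p, qbr h (y q - y p) = 0 := by
  obtain ⟨p₀, hp₀, q₀, hq₀, hpq₀⟩ := one_lt_card.mp (by omega : 1 < #S)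
  have hD := exp_sub_exp_ne_zero_of_qbr_ne_zero (hy p₀ hp₀ q₀ hq₀ hpq₀)
  have hinj : Set.InjOn (fun p => Complex.exp (h * y p)) S := fun p hp q hq hpq => by
    by_contra hne
    exact exp_ne_exp_of_qbr_sub_ne_zero (hy p hp q hq hne) hpq.symm
  have hdeg : (Lagrange.nodal T fun t => Complex.exp (h * a t)).degree < ↑(#S - 1) := by
    rw [Lagrange.degree_nodal]; exact_mod_cast (by omega : #T < #S - 1)
  have hdeg' : (Lagrange.nodal T fun t => Complex.exp (h * a t)).degree < #S :=
    hdeg.trans (by exact_mod_cast Nat.sub_lt_self one_pos (by omega))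
  rw [sum_congr rfl fun p hp => prod_qbr_div_prod_qbr_eq_mul_nodal_div h y T a hcard hp hD,
    ← mul_sum, ← Lagrange.coeff_eq_sum hinj hdeg', coeff_eq_zero_of_degree_lt hdeg, mul_zero]

lemma prod_erase_product_range_two {α M : Type*} [DecidableEq α] [CommMonoid M] {I : Finset α}
    {l : α} (hl : l ∈ I) {s : ℕ} (hs : s ∈ range 2) (f : α × ℕ → M) :
    ∏ q ∈ (I ×ˢ range 2).erase (l, s), f q =
      f (l, 1 - s) * ∏ i ∈ I.erase l, (f (i, 0) * f (i, 1)) := by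
  have hsplit : (I ×ˢ range 2).erase (l, s) = insert (l, 1 - s) ((I.erase l) ×ˢ range 2) := by
    ext ⟨i, t⟩
    rw [mem_range] at hs
    by_cases hi : i = l
    · subst hi
      simp only [mem_erase, ne_eq, Prod.mk.injEq, true_and, mem_product, hl, mem_range,
        mem_insert, not_true_eq_false, and_true, false_and, or_false]
      omega
    · simp [hi]
  rw [hsplit, prod_insert (by simp), prod_product]
  simp [prod_range_succ]

lemma neg_one_pow_mul_prod_qbr_div_eq {h : ℂ} (hh : Complex.exp h ≠ 1) (L1 L0 Lm : ℤ → ℂ)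
    (I1 Im I0 : Finset ℤ) {l : ℤ} (hl : l ∈ I0) {s : ℕ} (hs : s ∈ range 2) :
    (-1 : ℂ) ^ s *
        ((∏ i ∈ I1, qbr h (L1 i - L0 l + s)) * ∏ i ∈ Im, qbr h (Lm i - L0 l + s)) /
        ∏ i ∈ I0.erase l, qbr h (L0 i - L0 l + s) * qbr h (L0 i - L0 l + s - 1) =
      -((∏ t ∈ I1.disjSum Im, qbr h (Sum.elim L1 Lm t - (L0 l - s))) /
        ∏ q ∈ (I0 ×ˢ range 2).erase (l, s), qbr h ((L0 q.1 - q.2) - (L0 l - s))) := by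
  rw [prod_erase_product_range_two hl hs, prod_disjSum]
  simp only [Sum.elim_inl, Sum.elim_inr, Nat.cast_zero, Nat.cast_one, sub_zero,
    sub_sub_sub_cancel_left]
  obtain rfl | rfl : s = 0 ∨ s = 1 := by rw [mem_range] at hs; omega
  · simp only [pow_zero, one_mul, Nat.cast_zero, Nat.cast_one, Nat.sub_zero, add_zero, sub_zero,
      zero_sub, qbr_neg, qbr_one hh, neg_one_mul, div_neg, neg_neg, sub_right_comm _ (1 : ℂ)]
  · simp only [pow_one, Nat.cast_one, Nat.sub_self, Nat.cast_zero, sub_zero, one_mul, qbr_one hh,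
      add_sub_cancel_right, sub_sub_eq_add_sub, add_sub_right_comm, sub_right_comm _ (1 : ℂ),
      neg_mul, neg_div]

lemma qbr_node_sub_ne_zero {α : Type*} {h : ℂ} (hh : Complex.exp h ≠ 1) {I : Finset α}
    {L : α → ℂ} (hL : ∀ i ∈ I, ∀ l ∈ I, i ≠ l → ∀ s ∈ range 2,
      qbr h (L i - L l + (s : ℂ)) ≠ 0 ∧ qbr h (L i - L l + (s : ℂ) - 1) ≠ 0) :
    ∀ p ∈ I ×ˢ range 2, ∀ q ∈ I ×ˢ range 2, p ≠ q →
      qbr h ((L q.1 - q.2) - (L p.1 - p.2)) ≠ 0 := by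
  rintro ⟨l, s⟩ hp ⟨i, t⟩ hq hne
  rw [mem_product, mem_range] at hp hq
  obtain ⟨hl, hs⟩ := hp
  obtain ⟨hi, ht⟩ := hq
  by_cases hil : i = l
  · subst hil
    obtain ⟨rfl, rfl⟩ | ⟨rfl, rfl⟩ : s = 0 ∧ t = 1 ∨ s = 1 ∧ t = 0 := by
      have : s ≠ t := fun hst => hne (by rw [hst])
      omega
    all_goals norm_num [qbr_neg, qbr_one hh]
  · obtain ⟨h0, h1⟩ := hL i hi l hl hil s (mem_range.2 hs)
    obtain rfl | rfl : t = 0 ∨ t = 1 := by omega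
    · convert h0 using 2; push_cast; ring
    · convert h1 using 2; push_cast; ring

/-- `L1 i` stands for `L_{i,2k+1}`, `L0 l` for `L_{l,2k}` and `Lm i` for `L_{i,2k-1}`. -/
theorem identity_24a_general (h : ℂ) (hh : Complex.exp h ≠ 1) (k : ℤ)
    (j m : ℤ) (hj : j ∈ Finset.Icc (1 - k) (k - 1)) (hm : m ∈ Finset.Icc (1 - k) (k - 1))
    (hjm : j ≠ m) (L1 L0 Lm : ℤ → ℂ)
    (hL0 : ∀ i ∈ Finset.Icc (-k) (k - 1), ∀ l ∈ Finset.Icc (-k) (k - 1), i ≠ l →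
      ∀ s ∈ Finset.range 2,
        qbr h (L0 i - L0 l + (s : ℂ)) ≠ 0 ∧ qbr h (L0 i - L0 l + (s : ℂ) - 1) ≠ 0) :
    ∑ s ∈ Finset.range 2, ∑ l ∈ Finset.Icc (-k) (k - 1), (-1 : ℂ) ^ s *
      ((∏ i ∈ Finset.Icc (-k) k, qbr h (L1 i - L0 l + (s : ℂ))) *
        ∏ i ∈ ((Finset.Icc (1 - k) (k - 1)).erase j).erase m, qbr h (Lm i - L0 l + (s : ℂ))) /
      ∏ i ∈ (Finset.Icc (-k) (k - 1)).erase l,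
        qbr h (L0 i - L0 l + (s : ℂ)) * qbr h (L0 i - L0 l + (s : ℂ) - 1) = 0 := by
  set I0 := Icc (-k) (k - 1)
  set Im := ((Icc (1 - k) (k - 1)).erase j).erase m
  have hcard : #((Icc (-k) k).disjSum Im) + 2 = #(I0 ×ˢ range 2) := by
    have hk : 2 ≤ k := by rw [mem_Icc] at hj hm; omega
    rw [card_disjSum, card_product, card_range, card_erase_of_mem (mem_erase.2 ⟨hjm.symm, hm⟩),
      card_erase_of_mem hj, Int.card_Icc, Int.card_Icc, Int.card_Icc]
    omega
  calc _ = ∑ p ∈ I0 ×ˢ range 2, -((∏ t ∈ (Icc (-k) k).disjSum Im,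
          qbr h (Sum.elim L1 Lm t - (L0 p.1 - p.2))) /
        ∏ q ∈ (I0 ×ˢ range 2).erase p, qbr h ((L0 q.1 - q.2) - (L0 p.1 - p.2))) := by
        rw [sum_product_right]
        exact sum_congr rfl fun s hs => sum_congr rfl fun l hl =>
          neg_one_pow_mul_prod_qbr_div_eq hh L1 L0 Lm _ _ _ hl hs
    _ = 0 := by
        rw [sum_neg_distrib, neg_eq_zero]
        exact sum_prod_qbr_div_prod_qbr_eq_zero h (I0 ×ˢ range 2) (fun q => L0 q.1 - q.2)
          ((Icc (-k) k).disjSum Im) (Sum.elim L1 Lm) hcard (qbr_node_sub_ne_zero hh hL0)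

/-- Identity (24a).  `L1 i` stands for `L_{i,2k+1}`, `L0 l` for `L_{l,2k}` and
`Lm i` for `L_{i,2k-1}`. -/
theorem identity_24a (h : ℂ) (hh : Complex.exp h ≠ 1) (k : ℤ) (hk : 1 ≤ k)
    (j m : ℤ) (hj : j ∈ Finset.Icc (1 - k) (k - 1)) (hm : m ∈ Finset.Icc (1 - k) (k - 1))
    (hjm : j ≠ m) (L1 L0 Lm : ℤ → ℂ)
    (hL0 : ∀ i ∈ Finset.Icc (-k) (k - 1), ∀ l ∈ Finset.Icc (-k) (k - 1), i ≠ l →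
      ∀ s ∈ Finset.range 2,
        qbr h (L0 i - L0 l + (s : ℂ)) ≠ 0 ∧ qbr h (L0 i - L0 l + (s : ℂ) - 1) ≠ 0) :
    ∑ s ∈ Finset.range 2, ∑ l ∈ Finset.Icc (-k) (k - 1), (-1 : ℂ) ^ s *
      ((∏ i ∈ Finset.Icc (-k) k, qbr h (L1 i - L0 l + (s : ℂ))) *
        ∏ i ∈ ((Finset.Icc (1 - k) (k - 1)).erase j).erase m, qbr h (Lm i - L0 l + (s : ℂ))) /
      ∏ i ∈ (Finset.Icc (-k) (k - 1)).erase l,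
        qbr h (L0 i - L0 l + (s : ℂ)) * qbr h (L0 i - L0 l + (s : ℂ) - 1) = 0 :=
  identity_24a_general h hh k j m hj hm hjm L1 L0 Lm hL0
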